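/- Let (G, +) be a finite abelian group with a commutative associative nilpotent ring structure A, circle operation g ∘ h = g + h + g·h, and τ(g)(x) = g ∘ x. Then for every g, k ∈ G, the conjugate τ(k) ∘ λ(g) ∘ τ(k)⁻¹ equals λ(h) where h = g + k·g, and λ denotes left translation λ(g)(x) = g + x. In particular the image of τ lies in the holomorph of (G,+). -/
import Mathlib


/-- With `τ(k)(x) = k ∘ x = k + x + k*x` and `λ(g) = Equiv.addLeft g`,
conjugation gives `τ(k) λ(g) τ(k)⁻¹ = λ(g + k·g)`; in particular the image of `τ`
normalizes `λ(G)`, i.e. lies in the holomorph of `(G, +)`. -/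
theorem tau_conj_formula (G : Type*) [NonUnitalCommRing G] [Finite G]
    (hnil : ∃ m : ℕ, 1 ≤ m ∧ ∀ (a : G) (l : List G), m ≤ l.length + 1 →
      l.foldl (· * ·) a = 0)
    (τ : G → Equiv.Perm G) (hτ : ∀ g x : G, τ g x = g + x + g * x) :
    (∀ g k : G,
      τ k * Equiv.addLeft g * (τ k)⁻¹ = Equiv.addLeft (g + k * g)) ∧
    (∀ k g : G, ∃ h : G, τ k * Equiv.addLeft g * (τ k)⁻¹ = Equiv.addLeft h) := by
  have main : ∀ g k : G,
      τ k * Equiv.addLeft g * (τ k)⁻¹ = Equiv.addLeft (g + k * g) := by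
    intro g k
    ext x
    set y := (τ k)⁻¹ x with hy
    have hx : x = k + y + k * y := by
      rw [← hτ k y, hy]
      exact (Equiv.apply_symm_apply (τ k) x).symm
    show (τ k) (g + (τ k)⁻¹ x) = g + k * g + x
    rw [← hy, hτ, hx, mul_add]
    abel
  exact ⟨main, fun k g => ⟨g + k * g, main g k⟩⟩
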